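/- arXiv:math/0601399 — 4 statements merged into one kernel-verified Lean document; each statement's English description precedes it below -/
import Mathlib

section
/- Let R be a commutative ring, g ≥ 2 an integer, and ε ∈ R with ε^(2g+2) = 1. For any tuple (a_1, …, a_g) of elements of R, define b_i := ε^(2i)·a_i for 1 ≤ i ≤ g. Then the dihedral invariants of (b_1, …, b_g) coincide with those of (a_1, …, a_g), i.e. b_1^(g-i+1)·b_i + b_g^(g-i+1)·b_{g+1-i} = a_1^(g-i+1)·a_i + a_g^(g-i+1)·a_{g+1-i} for every 1 ≤ i ≤ g. -/
/-! Each term of `u_i` is a monomial `x ^ n * y` on which `τ₁` acts by a power of `ε`: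
`a_1^(g-i+1) a_i` picks up `ε^(2(g-i+1) + 2i) = ε^(2g+2)`, and `a_g^(g-i+1) a_(g+1-i)` picks up
`ε^(2g(g-i+1) + 2(g+1-i)) = ε^((2g+2)(g+1-i))`. Both exponents are multiples of `2g+2`. -/

theorem pow_mul_pow_mul_eq_of_pow_eq_one_of_dvd {R : Type*} [CommMonoid R] {ε : R} {m : ℕ}
    (hε : ε ^ m = 1) (x y : R) {p q n : ℕ} (h : m ∣ p * n + q) :
    (ε ^ p * x) ^ n * (ε ^ q * y) = x ^ n * y := by
  obtain ⟨c, hc⟩ := h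
  calc (ε ^ p * x) ^ n * (ε ^ q * y) = ε ^ (p * n + q) * (x ^ n * y) := by
        rw [mul_pow, ← pow_mul, pow_add]; ac_rfl
    _ = x ^ n * y := by rw [hc, pow_mul, hε, one_pow, one_mul]

theorem dihedral_invariants_tau1_invariant_general {R : Type*} [CommRing R]
    (g : ℕ) (ε : R) (hε : ε ^ (2 * g + 2) = 1)
    (a b : ℕ → R) (hb : ∀ i, 1 ≤ i → i ≤ g → b i = ε ^ (2 * i) * a i) :
    ∀ i, 1 ≤ i → i ≤ g →
      b 1 ^ (g - i + 1) * b i + b g ^ (g - i + 1) * b (g + 1 - i)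
        = a 1 ^ (g - i + 1) * a i + a g ^ (g - i + 1) * a (g + 1 - i) := by
  intro i hi hig
  obtain ⟨k, rfl⟩ : ∃ k, g = i + k := ⟨g - i, by omega⟩
  rw [show i + k - i + 1 = k + 1 by omega, show i + k + 1 - i = k + 1 by omega,
    hb 1 le_rfl (by omega), hb i hi (by omega), hb (i + k) (by omega) le_rfl,
    hb (k + 1) (by omega) (by omega),
    pow_mul_pow_mul_eq_of_pow_eq_one_of_dvd hε _ _ ⟨1, by ring⟩,
    pow_mul_pow_mul_eq_of_pow_eq_one_of_dvd hε _ _ ⟨k + 1, by ring⟩]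

/-- the dihedral invariants are preserved under the
transformation `τ₁ : aᵢ ↦ ε^(2i)·aᵢ` where `ε^(2g+2) = 1`. -/
theorem dihedral_invariants_tau1_invariant {R : Type*} [CommRing R]
    (g : ℕ) (hg : 2 ≤ g) (ε : R) (hε : ε ^ (2 * g + 2) = 1)
    (a b : ℕ → R) (hb : ∀ i, 1 ≤ i → i ≤ g → b i = ε ^ (2 * i) * a i) :
    ∀ i, 1 ≤ i → i ≤ g →
      b 1 ^ (g - i + 1) * b i + b g ^ (g - i + 1) * b (g + 1 - i)
        = a 1 ^ (g - i + 1) * a i + a g ^ (g - i + 1) * a (g + 1 - i) :=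
  dihedral_invariants_tau1_invariant_general g ε hε a b hb
end

section
/- Let k be a field of characteristic zero, g ≥ 2 an integer, and u_1, …, u_g ∈ k with u_1 ≠ 0. Let b ∈ k satisfy b^(g+1) = u_1/2, and define a_g := b and a_i := (u_{g+1-i}/u_1)·b^(g+1-i) for 1 ≤ i ≤ g−1 (so a_1 = (u_g/u_1)·b^g). Then the first and last dihedral invariants of the tuple (a_1, …, a_g) are a_1^(g+1) + a_g^(g+1) = (2^(g-1)·u_1² + u_g^(g+1))/(2^g·u_1) and 2·a_1·a_g = u_g. -/
/-! With `b ^ (g + 1) = u₁ / 2` and `a₁ = (u_g / u₁) b ^ g`, every power of `b` that occurs in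
`a₁ ^ (g + 1)`, `a_g ^ (g + 1)` and `a₁ a_g` is a power of `b ^ (g + 1)`, so both invariants
become rational functions of `u₁` and `u_g` alone. -/

section RescaledModel

variable {K : Type*} [Field K] {n : ℕ} {b c d : K}

theorem div_mul_pow_pow_succ_of_pow_succ_eq_half (hc : c ≠ 0) (hb : b ^ (n + 1) = c / 2) :
    (d / c * b ^ n) ^ (n + 1) = d ^ (n + 1) / (2 ^ n * c) := by
  calc (d / c * b ^ n) ^ (n + 1) = (d / c) ^ (n + 1) * (b ^ (n + 1)) ^ n := by
        rw [mul_pow, ← pow_mul, ← pow_mul, mul_comm n]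
    _ = c ^ n * d ^ (n + 1) / (c ^ n * (2 ^ n * c)) := by
        rw [hb, div_pow, div_pow, div_mul_div_comm, pow_succ]
        ring
    _ = d ^ (n + 1) / (2 ^ n * c) := mul_div_mul_left _ _ (pow_ne_zero n hc)

theorem two_mul_div_mul_pow_mul_of_pow_succ_eq_half [NeZero (2 : K)] (hc : c ≠ 0)
    (hb : b ^ (n + 1) = c / 2) : 2 * (d / c * b ^ n) * b = d := by
  rw [mul_assoc, mul_assoc, ← pow_succ, hb]
  field_simp

end RescaledModel

/-- the first and last dihedral invariants of the normal form of
the model curve `Y² = u₁X^(2g+2) + u₁X^(2g) + u₂X^(2g-2) + … + u_gX² + 2` are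
`a₁^(g+1) + a_g^(g+1) = (2^(g-1)u₁² + u_g^(g+1))/(2^g·u₁)` and
`2a₁a_g = u_g`. -/
theorem dihedral_invariants_of_rescaled_model {k : Type*} [Field k] [CharZero k]
    (g : ℕ) (hg : 2 ≤ g) (u : ℕ → k) (hu : u 1 ≠ 0) (b : k)
    (hb : b ^ (g + 1) = u 1 / 2) (a : ℕ → k) (hag : a g = b)
    (ha : ∀ i, 1 ≤ i → i ≤ g - 1 → a i = u (g + 1 - i) / u 1 * b ^ (g + 1 - i)) :
    a 1 ^ (g + 1) + a g ^ (g + 1)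
        = (2 ^ (g - 1) * u 1 ^ 2 + u g ^ (g + 1)) / (2 ^ g * u 1)
      ∧ 2 * a 1 * a g = u g := by
  have ha₁ : a 1 = u g / u 1 * b ^ g := by
    simpa using ha 1 le_rfl (by omega)
  rw [ha₁, hag, div_mul_pow_pow_succ_of_pow_succ_eq_half hu hb, hb,
    two_mul_div_mul_pow_mul_of_pow_succ_eq_half hu hb]
  refine ⟨?_, rfl⟩
  obtain ⟨n, rfl⟩ : ∃ n, g = n + 1 := ⟨g - 1, by omega⟩
  rw [Nat.add_sub_cancel]
  field_simp
  ring
end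

section
/- Let k be a field of characteristic zero, g ≥ 2 an integer, and u_1, …, u_g ∈ k with u_1 ≠ 0 and 2^(g-1)·u_1² = u_g^(g+1). Let b ∈ k satisfy b^(g+1) = u_1/2, and define a_g := b and a_i := (u_{g+1-i}/u_1)·b^(g+1-i) for 1 ≤ i ≤ g−1. Then the first and last dihedral invariants of (a_1, …, a_g) satisfy a_1^(g+1) + a_g^(g+1) = u_1 and 2·a_1·a_g = u_g. -/
/-! Since `a₁ = (u_g / u₁) b^g`, the relation `b^(g+1) = u₁ / 2` gives
`2 a₁ a_g = 2 (u_g / u₁) b^(g+1) = u_g`, and together with the locus equation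
`a₁^(g+1) = (u_g^(g+1) / u₁^(g+1)) (u₁ / 2)^g = u₁ / 2 = a_g^(g+1)`. -/

section

variable {K : Type*} [Field K] {b c v : K}

theorem rescaled_coeff_pow_of_locus {m : ℕ} (h2 : (2 : K) ≠ 0) (hc : c ≠ 0)
    (hlocus : 2 ^ m * c ^ 2 = v ^ (m + 2)) (hb : b ^ (m + 2) = c / 2) :
    (v / c * b ^ (m + 1)) ^ (m + 2) = c / 2 := by
  rw [mul_pow, div_pow, ← pow_mul, mul_comm (m + 1), pow_mul, hb, ← hlocus, div_pow]
  field_simp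
  ring

theorem two_mul_rescaled_coeff_mul {n : ℕ} (h2 : (2 : K) ≠ 0) (hc : c ≠ 0)
    (hb : b ^ (n + 1) = c / 2) : 2 * (v / c * b ^ n) * b = v := by
  rw [mul_assoc, mul_assoc, ← pow_succ, hb]
  field_simp

end

/-- if moreover `2^(g-1)u₁² = u_g^(g+1)`, then the first and last
dihedral invariants of the normal form of the model curve recover `u₁` and
`u_g`, i.e. the model curve is a representative of the moduli point. -/
theorem dihedral_invariants_of_rescaled_model_on_locus {k : Type*} [Field k]
    [CharZero k] (g : ℕ) (hg : 2 ≤ g) (u : ℕ → k) (hu : u 1 ≠ 0)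
    (hlocus : 2 ^ (g - 1) * u 1 ^ 2 = u g ^ (g + 1)) (b : k)
    (hb : b ^ (g + 1) = u 1 / 2) (a : ℕ → k) (hag : a g = b)
    (ha : ∀ i, 1 ≤ i → i ≤ g - 1 → a i = u (g + 1 - i) / u 1 * b ^ (g + 1 - i)) :
    a 1 ^ (g + 1) + a g ^ (g + 1) = u 1 ∧ 2 * a 1 * a g = u g := by
  obtain ⟨m, rfl⟩ : ∃ m, g = m + 1 := ⟨g - 1, by omega⟩
  have ha1 : a 1 = u (m + 1) / u 1 * b ^ (m + 1) := by simpa using ha 1 le_rfl (by omega)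
  have hlocus' : 2 ^ m * u 1 ^ 2 = u (m + 1) ^ (m + 2) := by simpa using hlocus
  refine ⟨?_, ?_⟩
  · rw [ha1, hag, rescaled_coeff_pow_of_locus two_ne_zero hu hlocus' hb, hb, add_halves]
  · rw [ha1, hag, two_mul_rescaled_coeff_mul two_ne_zero hu hb]
end

section
/- Let k be a field of characteristic zero, g ≥ 3 an odd integer, n := (g+1)/2, and λ_1, …, λ_n ∈ k with s := λ_1 + … + λ_n. Write ∏_{i=1}^{n} (X⁴ − λ_i·X² + 1) = X^(2g+2) + a_g·X^(2g) + … + a_1·X² + 1. Then the first and last dihedral invariants of (a_1, …, a_g) satisfy u_1 = a_1^(g+1) + a_g^(g+1) = 2·s^(g+1) and u_g = 2·a_1·a_g = 2·s², and consequently 2^(g-1)·u_1² − u_g^(g+1) = 0, so that (2^(g-1)·u_1² + u_g^(g+1))·(2^(g-1)·u_1² − u_g^(g+1)) = 0. -/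
open Polynomial Finset

/-!
The product is `expand 2 F` with `F = ∏ᵢ (X² − λᵢX + 1)`, so `a_c` is the `c`-th coefficient
of `F`. Since every factor of `F` is monic with constant term `1`, the coefficients of `F` next to
the top and next to the bottom are both `−s`; hence `a₁ = a_g = −s`. As `g + 1` is even this gives
`u₁ = 2s^(g+1)` and `u_g = 2s²`, and `2^(g-1)(2s^(g+1))² = (2s²)^(g+1)`.
-/

namespace Polynomial

theorem coeff_one_prod_of_coeff_zero_eq_one {R ι : Type*} [CommSemiring R] (s : Finset ι)
    (f : ι → R[X]) (h : ∀ i ∈ s, (f i).coeff 0 = 1) :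
    (∏ i ∈ s, f i).coeff 1 = ∑ i ∈ s, (f i).coeff 1 := by
  classical
  induction s using Finset.induction_on with
  | empty => simp [coeff_one]
  | insert j s hj ih =>
    have hs : ∀ i ∈ s, (f i).coeff 0 = 1 := fun i hi => h i (mem_insert_of_mem hi)
    have hprod0 : (∏ i ∈ s, f i).coeff 0 = 1 := by
      rw [coeff_zero_prod, prod_eq_one hs]
    rw [prod_insert hj, sum_insert hj, mul_coeff_one, hprod0, h j (mem_insert_self j s),
      ih hs, mul_one, one_mul, add_comm]

section Quadratic

variable {R : Type*} [CommRing R]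

theorem monic_X_sq_sub_C_mul_X_add_one [Nontrivial R] (c : R) :
    (X ^ 2 - C c * X + 1).Monic := by
  monicity!

theorem natDegree_X_sq_sub_C_mul_X_add_one [Nontrivial R] (c : R) :
    (X ^ 2 - C c * X + 1).natDegree = 2 := by
  compute_degree!

theorem nextCoeff_X_sq_sub_C_mul_X_add_one [Nontrivial R] (c : R) :
    (X ^ 2 - C c * X + 1).nextCoeff = -c := by
  rw [nextCoeff_of_natDegree_pos] <;> simp [natDegree_X_sq_sub_C_mul_X_add_one, coeff_one]

theorem expand_two_X_sq_sub_C_mul_X_add_one (c : R) :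
    expand R 2 (X ^ 2 - C c * X + 1) = X ^ 4 - C c * X ^ 2 + 1 := by
  simp only [map_add, map_sub, map_mul, map_pow, map_one, expand_C, expand_X]
  ring

variable (s : Finset ℕ) (lam : ℕ → R)

theorem coeff_one_prod_X_sq_sub_C_mul_X_add_one :
    (∏ i ∈ s, (X ^ 2 - C (lam i) * X + 1)).coeff 1 = -∑ i ∈ s, lam i := by
  rw [coeff_one_prod_of_coeff_zero_eq_one _ _ (fun i _ => by simp)]
  simp [coeff_one]

theorem coeff_prod_X_sq_sub_C_mul_X_add_one_two_mul_card_sub_one [Nontrivial R]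
    (hs : s.Nonempty) :
    (∏ i ∈ s, (X ^ 2 - C (lam i) * X + 1)).coeff (2 * #s - 1) = -∑ i ∈ s, lam i := by
  have hmonic : ∀ i ∈ s, (X ^ 2 - C (lam i) * X + 1).Monic :=
    fun i _ => monic_X_sq_sub_C_mul_X_add_one (lam i)
  have hdeg : (∏ i ∈ s, (X ^ 2 - C (lam i) * X + 1)).natDegree = 2 * #s := by
    rw [natDegree_prod_of_monic _ _ hmonic]
    simp only [natDegree_X_sq_sub_C_mul_X_add_one, sum_const, smul_eq_mul]
    ring
  rw [← hdeg, ← nextCoeff_of_natDegree_pos (by rw [hdeg]; have := hs.card_pos; omega),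
    Monic.nextCoeff_prod _ _ hmonic]
  simp [nextCoeff_X_sq_sub_C_mul_X_add_one]

end Quadratic

theorem coeff_two_mul_X_pow_add_sum_add_one {R : Type*} [Semiring R] (g : ℕ) (a : ℕ → R)
    {c : ℕ} (hc : c ∈ Icc 1 g) :
    (X ^ (2 * g + 2) + (∑ i ∈ Icc 1 g, C (a i) * X ^ (2 * i)) + 1).coeff (2 * c) = a c := by
  obtain ⟨hc1, hcg⟩ := mem_Icc.mp hc
  rw [coeff_add, coeff_add, coeff_X_pow, if_neg (by omega), coeff_one, if_neg (by omega),
    finsetSum_coeff, sum_eq_single_of_mem c hc]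
  · simp
  · intro i _ hic
    rw [coeff_C_mul, coeff_X_pow, if_neg (by omega), mul_zero]

end Polynomial

theorem two_involutions_locus_odd_genus_general {k : Type*} [Field k]
    (g : ℕ) (hodd : Odd g) (n : ℕ) (hn : n = (g + 1) / 2)
    (lam : ℕ → k) (s : k) (hs : s = ∑ i ∈ Finset.range n, lam i)
    (a : ℕ → k)
    (ha : (∏ i ∈ Finset.range n, (X ^ 4 - C (lam i) * X ^ 2 + 1))
        = X ^ (2 * g + 2) + (∑ i ∈ Finset.Icc 1 g, C (a i) * X ^ (2 * i)) + 1)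
    (u₁ ug : k)
    (hu₁ : u₁ = a 1 ^ (g + 1) + a g ^ (g + 1)) (hug : ug = 2 * a 1 * a g) :
    u₁ = 2 * s ^ (g + 1) ∧ ug = 2 * s ^ 2 ∧
      2 ^ (g - 1) * u₁ ^ 2 - ug ^ (g + 1) = 0 ∧
      (2 ^ (g - 1) * u₁ ^ 2 + ug ^ (g + 1)) *
        (2 ^ (g - 1) * u₁ ^ 2 - ug ^ (g + 1)) = 0 := by
  obtain ⟨m, rfl⟩ := hodd
  obtain rfl : n = m + 1 := by omega
  set F := ∏ i ∈ range (m + 1), (X ^ 2 - C (lam i) * X + 1)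
  have hexpand : expand k 2 F = ∏ i ∈ range (m + 1), (X ^ 4 - C (lam i) * X ^ 2 + 1) := by
    simp only [F, map_prod, expand_two_X_sq_sub_C_mul_X_add_one]
  have hcoeff : ∀ c ∈ Icc 1 (2 * m + 1), a c = F.coeff c := fun c hc => by
    rw [← coeff_two_mul_X_pow_add_sum_add_one _ a hc, ← ha, ← hexpand,
      coeff_expand_mul' two_pos]
  have ha₁ : a 1 = -s := by
    rw [hcoeff 1 (by simp), hs, coeff_one_prod_X_sq_sub_C_mul_X_add_one]
  have ha_g : a (2 * m + 1) = -s := by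
    rw [hcoeff _ (by simp), hs,
      ← coeff_prod_X_sq_sub_C_mul_X_add_one_two_mul_card_sub_one _ lam nonempty_range_add_one,
      card_range]
    congr 1
  have hu₁' : u₁ = 2 * s ^ (2 * m + 1 + 1) := by
    rw [hu₁, ha₁, ha_g, Even.neg_pow ⟨m + 1, by ring⟩]
    ring
  have hug' : ug = 2 * s ^ 2 := by
    rw [hug, ha₁, ha_g]
    ring
  have hdiff : 2 ^ (2 * m + 1 - 1) * u₁ ^ 2 - ug ^ (2 * m + 1 + 1) = 0 := by
    rw [hu₁', hug', Nat.add_sub_cancel]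
    ring
  exact ⟨hu₁', hug', hdiff, by rw [hdiff, mul_zero]⟩

/-- for `g ≥ 3` odd, writing
`∏ᵢ (X⁴ − λᵢX² + 1) = X^(2g+2) + a_gX^(2g) + … + a₁X² + 1` and
`s = λ₁ + … + λₙ`, the dihedral invariants satisfy `u₁ = 2s^(g+1)`,
`u_g = 2s²`, hence `2^(g-1)u₁² − u_g^(g+1) = 0` and the Jacobian determinant
`(2^(g-1)u₁² + u_g^(g+1))(2^(g-1)u₁² − u_g^(g+1))` vanishes. -/
theorem two_involutions_locus_odd_genus {k : Type*} [Field k] [CharZero k]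
    (g : ℕ) (hg : 3 ≤ g) (hodd : Odd g) (n : ℕ) (hn : n = (g + 1) / 2)
    (lam : ℕ → k) (s : k) (hs : s = ∑ i ∈ Finset.range n, lam i)
    (a : ℕ → k)
    (ha : (∏ i ∈ Finset.range n, (X ^ 4 - C (lam i) * X ^ 2 + 1))
        = X ^ (2 * g + 2) + (∑ i ∈ Finset.Icc 1 g, C (a i) * X ^ (2 * i)) + 1)
    (u₁ ug : k)
    (hu₁ : u₁ = a 1 ^ (g + 1) + a g ^ (g + 1)) (hug : ug = 2 * a 1 * a g) :
    u₁ = 2 * s ^ (g + 1) ∧ ug = 2 * s ^ 2 ∧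
      2 ^ (g - 1) * u₁ ^ 2 - ug ^ (g + 1) = 0 ∧
      (2 ^ (g - 1) * u₁ ^ 2 + ug ^ (g + 1)) *
        (2 ^ (g - 1) * u₁ ^ 2 - ug ^ (g + 1)) = 0 :=
  two_involutions_locus_odd_genus_general g hodd n hn lam s hs a ha u₁ ug hu₁ hug
end
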